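/- Let c₁ > 0 and let m, u : ℝ → ℝ³ be continuous. If v₁, v₂ : ℝ → ℝ³ are differentiable and both satisfy (d/dt) vᵢ(t) = vᵢ(t) × m(t) − c₁ vᵢ(t) + u(t) for all t, then ‖v₁(t) − v₂(t)‖ = e^{−c₁(t−s)} ‖v₁(s) − v₂(s)‖ for all t ≥ s. In particular, any two trajectories of the vector-part error-quaternion dynamics of the geometric orientation observer converge to each other exponentially at rate c₁, i.e., these dynamics are contracting with rate c₁ in the identity metric. -/

import Mathlib

open Filter Real Topology

noncomputable section

/-- ℝ³ with the Euclidean norm. -/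
abbrev E3 := EuclideanSpace ℝ (Fin 3)

/-- Cross product on ℝ³. -/
def cross (u v : E3) : E3 :=
  WithLp.toLp 2 ![u 1 * v 2 - u 2 * v 1, u 2 * v 0 - u 0 * v 2, u 0 * v 1 - u 1 * v 0]

/-- The quaternion with real (scalar) part `a` and vector (imaginary) part `v`. -/
def quat (a : ℝ) (v : E3) : Quaternion ℝ := ⟨a, v 0, v 1, v 2⟩

/-- The vector (imaginary) part of a quaternion, as an element of ℝ³. -/
def qvec (q : Quaternion ℝ) : E3 := WithLp.toLp 2 ![q.imI, q.imJ, q.imK]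

/-!
The input `u` cancels in the difference `w = v₁ − v₂`, which solves `ẇ = w × m − c₁ w`. Since
`w × m ⟂ w`, the rescaled curve `e^{c₁t} w(t)` has derivative `e^{c₁t} (w × m)` orthogonal to
itself, so its norm is constant.
-/

lemma sub_cross (a b c : E3) : cross (a - b) c = cross a c - cross b c := by
  ext i
  fin_cases i <;> simp [cross] <;> ring

lemma inner_self_cross (v w : E3) : inner ℝ v (cross v w) = 0 := by
  simp only [PiLp.inner_apply, RCLike.inner_apply, starRingEnd_apply, star_trivial,
    Fin.sum_univ_three, cross, Matrix.cons_val_zero, Matrix.cons_val_one,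
    Matrix.cons_val_two, Matrix.tail_cons, Matrix.head_cons]
  ring

section NormEvolution

variable {F : Type*} [NormedAddCommGroup F] [InnerProductSpace ℝ F]

theorem norm_eq_of_hasDerivAt_inner_eq_zero {w w' : ℝ → F}
    (hw : ∀ t, HasDerivAt w (w' t) t) (horth : ∀ t, inner ℝ (w t) (w' t) = 0) (s t : ℝ) :
    ‖w t‖ = ‖w s‖ := by
  have hsq : ∀ t, HasDerivAt (‖w ·‖ ^ 2) 0 t := fun t => by
    simpa [horth t] using (hw t).norm_sq
  have hsq_eq : ‖w t‖ ^ 2 = ‖w s‖ ^ 2 :=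
    is_const_of_deriv_eq_zero (fun t => (hsq t).differentiableAt) (fun t => (hsq t).deriv) t s
  exact (sq_eq_sq₀ (norm_nonneg _) (norm_nonneg _)).1 hsq_eq

theorem norm_eq_exp_mul_of_hasDerivAt_sub_smul {w f : ℝ → F} {c : ℝ}
    (hw : ∀ t, HasDerivAt w (f t - c • w t) t) (horth : ∀ t, inner ℝ (w t) (f t) = 0)
    (s t : ℝ) : ‖w t‖ = Real.exp (-c * (t - s)) * ‖w s‖ := by
  have hz : ∀ t, HasDerivAt (fun t => Real.exp (c * t) • w t) (Real.exp (c * t) • f t) t := by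
    intro t
    have hexp : HasDerivAt (fun t => Real.exp (c * t)) (Real.exp (c * t) * c) t := by
      simpa using ((hasDerivAt_id t).const_mul c).exp
    exact (hexp.smul (hw t)).congr_deriv (by module)
  have hconst := norm_eq_of_hasDerivAt_inner_eq_zero hz
    (fun t => by simp [inner_smul_left, inner_smul_right, horth t]) s t
  rw [norm_smul, norm_smul, Real.norm_of_nonneg (Real.exp_pos _).le,
    Real.norm_of_nonneg (Real.exp_pos _).le] at hconst
  rw [show -c * (t - s) = c * s - c * t by ring, Real.exp_sub, div_mul_eq_mul_div,
    eq_div_iff (Real.exp_pos _).ne', mul_comm, hconst]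

end NormEvolution

theorem stmt_1 (c₁ : ℝ) (m u : ℝ → E3) (v₁ v₂ : ℝ → E3)
    (h₁ : ∀ t, HasDerivAt v₁ (cross (v₁ t) (m t) - c₁ • v₁ t + u t) t)
    (h₂ : ∀ t, HasDerivAt v₂ (cross (v₂ t) (m t) - c₁ • v₂ t + u t) t) :
    ∀ s t, s ≤ t → ‖v₁ t - v₂ t‖ = Real.exp (-c₁ * (t - s)) * ‖v₁ s - v₂ s‖ := by
  have hdiff : ∀ t, HasDerivAt (fun t => v₁ t - v₂ t)
      (cross (v₁ t - v₂ t) (m t) - c₁ • (v₁ t - v₂ t)) t := fun t =>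
    ((h₁ t).sub (h₂ t)).congr_deriv (by rw [sub_cross]; module)
  exact fun s t _ => norm_eq_exp_mul_of_hasDerivAt_sub_smul hdiff
    (fun t => inner_self_cross _ _) s t
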